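/- If a binary linear [n,k,d]-code C has maximum weight d' satisfying d' ≤ n + p - d for some p ≥ 0, then there exists a binary linear [n+p, k+1, d]-code. -/

import Mathlib

open Finset

section Aux
variable (n p : ℕ)

def extLM : (Fin n → ZMod 2) →ₗ[ZMod 2] (Fin (n + p) → ZMod 2) where
  toFun v i := if h : (i : ℕ) < n then v ⟨i, h⟩ else 0
  map_add' v w := by funext i; by_cases h : (i : ℕ) < n <;> simp [h]
  map_smul' a v := by funext i; by_cases h : (i : ℕ) < n <;> simp [h]

lemma extLM_inj : Function.Injective (extLM n p) := by
  intro v w h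
  funext j
  have := congrFun h (Fin.castAdd p j)
  simpa [extLM, j.isLt] using this

lemma norm_extLM (v : Fin n → ZMod 2) : hammingNorm (extLM n p v) = hammingNorm v := by
  unfold hammingNorm
  refine (Finset.card_bij (fun i _ => Fin.castAdd p i) ?_ ?_ ?_).symm
  · intro a ha
    simp only [mem_filter, mem_univ, true_and] at ha ⊢
    simpa [extLM, a.isLt] using ha
  · intro a _ b _ h
    exact Fin.castAdd_injective n p h
  · intro b hb
    simp only [mem_filter, mem_univ, true_and] at hb
    rcases Nat.lt_or_ge (b : ℕ) n with h | h
    · exact ⟨⟨b, h⟩, by simpa [extLM, h] using hb, by ext; simp⟩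
    · exfalso; apply hb; simp [extLM, Nat.not_lt.mpr h]

lemma norm_add_one (x : Fin (n + p) → ZMod 2) :
    hammingNorm (x + 1) = (n + p) - hammingNorm x := by
  unfold hammingNorm
  have : (filter (fun i => (x + 1) i ≠ 0) univ) = univ \ filter (fun i => x i ≠ 0) univ := by
    ext i
    simp only [mem_filter, mem_univ, true_and, mem_sdiff, Pi.add_apply, Pi.one_apply, not_not]
    constructor
    · intro h
      revert h; generalize x i = a; revert a; decide
    · intro h; rw [h]; decide
  rw [this, Finset.card_sdiff_of_subset (filter_subset _ _)]
  simp

lemma norm_one (_h : 0 < n + p) : hammingNorm (1 : Fin (n + p) → ZMod 2) = n + p := by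
  unfold hammingNorm
  have : filter (fun i : Fin (n+p) => (1 : Fin (n+p) → ZMod 2) i ≠ 0) univ = univ := by
    apply filter_true_of_mem; intro i _; exact one_ne_zero
  rw [this]; simp

end Aux

/-- If a binary linear [n,k,d]-code C has maximum weight d' ≤ n + p - d,
then there exists a binary linear [n+p, k+1, d]-code. -/
theorem stmt_9 (n k d d' p : ℕ) (C : Submodule (ZMod 2) (Fin n → ZMod 2))
    (hk : Module.finrank (ZMod 2) C = k)
    (hd_lb : ∀ c ∈ C, c ≠ 0 → d ≤ hammingNorm c)
    (hd_ex : ∃ c ∈ C, c ≠ 0 ∧ hammingNorm c = d)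
    (hd'_ub : ∀ c ∈ C, hammingNorm c ≤ d')
    (hd'_ex : ∃ c ∈ C, hammingNorm c = d')
    (hp : d' ≤ n + p - d) :
    ∃ D : Submodule (ZMod 2) (Fin (n + p) → ZMod 2),
      Module.finrank (ZMod 2) D = k + 1 ∧
      (∀ c ∈ D, c ≠ 0 → d ≤ hammingNorm c) ∧
      (∃ c ∈ D, c ≠ 0 ∧ hammingNorm c = d) := by
  classical
  obtain ⟨c₀, hc₀C, hc₀ne, hc₀d⟩ := hd_ex
  set f := extLM n p with hf
  have hfi := extLM_inj n p
  -- d ≥ 1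
  have hd1 : 1 ≤ d := by
    rw [← hc₀d]
    obtain ⟨i, hi⟩ := Function.ne_iff.mp hc₀ne
    have : i ∈ filter (fun j => c₀ j ≠ 0) univ := by simpa using hi
    exact Finset.card_pos.mpr ⟨i, this⟩
  -- d ≤ n
  have hdn : d ≤ n := by
    rw [← hc₀d]
    calc hammingNorm c₀ ≤ (univ : Finset (Fin n)).card := Finset.card_filter_le _ _
    _ = n := by simp
  have hnp : 0 < n + p := by omega
  have hsum : d' + d ≤ n + p := by omega
  have hone_ne : (1 : Fin (n + p) → ZMod 2) ≠ 0 := by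
    intro h
    have := congrFun h ⟨0, hnp⟩
    simp at this
  -- 1 is not in the embedded code
  have h1 : (1 : Fin (n + p) → ZMod 2) ∉ C.map f := by
    rintro ⟨c, hc, hfc⟩
    have h1' : hammingNorm (f c) = n + p := by rw [hfc]; exact norm_one n p hnp
    rw [hf, norm_extLM] at h1'
    have := hd'_ub c hc
    omega
  refine ⟨C.map f ⊔ Submodule.span (ZMod 2) {1}, ?_, ?_, ?_⟩
  · -- rank
    have hinf : C.map f ⊓ Submodule.span (ZMod 2) {1} = ⊥ := by
      rw [eq_bot_iff]
      rintro x ⟨hx1, hx2⟩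
      obtain ⟨a, rfl⟩ := Submodule.mem_span_singleton.mp hx2
      have ha : a = 0 ∨ a = 1 := by fin_cases a; exacts [Or.inl rfl, Or.inr rfl]
      rcases ha with rfl | rfl
      · simp
      · rw [one_smul] at hx1; exact absurd hx1 h1
    have := Submodule.finrank_sup_add_finrank_inf_eq (C.map f) (Submodule.span (ZMod 2) {1})
    rw [hinf] at this
    have hmap : Module.finrank (ZMod 2) (C.map f) = k := by
      rw [← hk]
      exact (Submodule.equivMapOfInjective f hfi C).symm.finrank_eq
    have hspan : Module.finrank (ZMod 2) (Submodule.span (ZMod 2)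
        ({1} : Set (Fin (n + p) → ZMod 2))) = 1 := finrank_span_singleton hone_ne
    simp only [hmap, hspan, finrank_bot] at this
    omega
  · -- min distance
    intro w hw hwne
    obtain ⟨x, hx, y, hy, rfl⟩ := Submodule.mem_sup.mp hw
    obtain ⟨c, hc, rfl⟩ := hx
    obtain ⟨a, rfl⟩ := Submodule.mem_span_singleton.mp hy
    have ha : a = 0 ∨ a = 1 := by fin_cases a; exacts [Or.inl rfl, Or.inr rfl]
    rcases ha with rfl | rfl
    · rw [zero_smul, add_zero] at hwne ⊢
      have hcne : c ≠ 0 := by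
        rintro rfl; exact hwne (by simp)
      rw [hf, norm_extLM]
      exact hd_lb c hc hcne
    · rw [one_smul]
      rw [norm_add_one]
      have h1' : hammingNorm (f c) = hammingNorm c := norm_extLM n p c
      have := hd'_ub c hc
      omega
  · -- word of weight d
    refine ⟨f c₀, Submodule.mem_sup_left (Submodule.mem_map_of_mem hc₀C), ?_, ?_⟩
    · intro h
      apply hc₀ne
      apply hfi
      rw [h, map_zero]
    · rw [hf, norm_extLM]; exact hc₀d
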